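/- arXiv:2011.03523 — 4 statements merged into one kernel-verified Lean document; each statement's English description precedes it below -/
import Mathlib

section
/- Sub-additivity of the totient for mixed expansions: let σ : Fin l → Fin n with l ≥ 1, let M = E_{σ(1)} ∘ ⋯ ∘ E_{σ(l)} be the mixed expansion operator, let S be a tuple, and for each i let Φ_i be the least positive integer with E_{σ(i)}^{Φ_i} S = 0. Then there is a least positive integer m with M^m S = 0, and it satisfies m ≤ min_i Φ_i; in particular l · m ≤ ∑_{i=1}^{l} Φ_i, i.e. Φ[M, S] ≤ (1/l) ∑_i Φ_i. -/
/-!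
Partial derivatives commute, so the directional expansions `E_i` pairwise commute; each is
additive, so it fixes the zero tuple. Hence for every `i`,
`M^m = E_{σ i}^m ∘ (∏_{j ≠ i} E_{σ j})^m` up to reordering, which kills `S` as soon as
`E_{σ i}^m S = 0`. Thus every `Φ i` lies in the set of exponents annihilating `S` under `M`,
its least element is at most each `Φ i`, and summing over `i` gives `l * m ≤ ∑ i, Φ i`.
-/

open MvPolynomial MeasureTheory

/-- The expansion operator in direction `i`: the paper's composite map
`(γ⁻¹ ∘ β ∘ γ ∘ ∇)_{[x_i]}`, sending a tuple `S` to the tuple whose `k`-th entry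
is the sum of the partial derivatives (in direction `i`) of all other entries. -/
noncomputable def expandDir {s n : ℕ} (i : Fin n) (S : Fin s → MvPolynomial (Fin n) ℝ) :
    Fin s → MvPolynomial (Fin n) ℝ :=
  fun k => ∑ t ∈ Finset.univ.filter (fun t => t ≠ k), MvPolynomial.pderiv i (S t)

/-- The mixed expansion operator `M = E_{σ 0} ∘ E_{σ 1} ∘ ⋯ ∘ E_{σ (l-1)}`. -/
noncomputable def mixedExpand {s n l : ℕ} (σ : Fin l → Fin n) :
    (Fin s → MvPolynomial (Fin n) ℝ) → (Fin s → MvPolynomial (Fin n) ℝ) :=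
  (List.ofFn (fun i => expandDir (s := s) (σ i))).foldr (fun f g => f ∘ g) id

theorem MvPolynomial.pderiv_comm {R σ : Type*} [CommSemiring R] (i j : σ)
    (p : MvPolynomial σ R) : pderiv i (pderiv j p) = pderiv j (pderiv i p) := by
  classical
  induction p using MvPolynomial.induction_on' with
  | monomial u a =>
    rcases eq_or_ne i j with rfl | hij
    · rfl
    · simp only [pderiv_monomial, Finsupp.tsub_apply, Finsupp.single_apply, if_neg hij,
        if_neg hij.symm, tsub_tsub, add_comm (Finsupp.single i 1)]
      push_cast [Nat.sub_zero]
      ring_nf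
  | add p q hp hq => simp [hp, hq]

theorem List.prod_pow_smul_eq_of_mem {M α : Type*} [Monoid M] [MulAction M α] {L : List M}
    {g : M} {a x : α} {m : ℕ} (hL : L.Pairwise Commute) (hfix : ∀ h ∈ L, h • a = a)
    (hg : g ∈ L) (hgx : g ^ m • x = a) : L.prod ^ m • x = a := by
  obtain ⟨l₁, l₂, rfl⟩ := List.append_of_mem hg
  have hperm := List.perm_middle (a := g) (l₁ := l₁) (l₂ := l₂)
  have hcomm : Commute g (l₁ ++ l₂).prod :=
    Commute.list_prod_right _ _ (List.pairwise_cons.mp ((hperm.pairwise_iff Commute.symm).mp hL)).1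
  have hrest : (l₁ ++ l₂).prod ∈ MulAction.stabilizerSubmonoid M a :=
    Submonoid.list_prod_mem _ fun h hh => hfix h (hperm.symm.subset (List.mem_cons_of_mem g hh))
  rw [hperm.prod_eq' hL, List.prod_cons, hcomm.mul_pow, (hcomm.pow_pow m m).eq, mul_smul, hgx]
  exact Submonoid.pow_mem _ hrest m

theorem List.foldr_comp_iterate_eq_of_mem {α : Type*} {L : List (α → α)} {g : α → α} {a x : α}
    {m : ℕ} (hL : L.Pairwise Function.Commute) (hfix : ∀ f ∈ L, f a = a) (hg : g ∈ L)
    (hgx : g^[m] x = a) : (L.foldr (· ∘ ·) id)^[m] x = a :=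
  List.prod_pow_smul_eq_of_mem (M := Function.End α) (hL.imp funext) hfix hg hgx

section Expansion

variable {s n : ℕ}

theorem expandDir_zero (i : Fin n) : expandDir (s := s) i 0 = 0 := by
  funext k
  simp [expandDir]

theorem expandDir_commute (i j : Fin n) :
    Function.Commute (expandDir (s := s) i) (expandDir (s := s) j) := fun S =>
  funext fun k => by simp only [expandDir, map_sum, pderiv_comm i j]

theorem mixedExpand_iterate_eq_zero {l : ℕ} {σ : Fin l → Fin n}
    {S : Fin s → MvPolynomial (Fin n) ℝ} {m : ℕ} (i : Fin l)
    (h : (expandDir (σ i))^[m] S = 0) : (mixedExpand σ)^[m] S = 0 :=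
  List.foldr_comp_iterate_eq_of_mem
    (List.pairwise_ofFn.mpr fun j k _ => expandDir_commute (σ j) (σ k))
    (List.forall_mem_ofFn_iff.mpr fun k => expandDir_zero (σ k)) (List.mem_ofFn.mpr ⟨i, rfl⟩) h

end Expansion

/-- sub-additivity of the totient for mixed expansions: the totient of the
mixed expansion exists, is at most each directional totient, and hence at most their
average. -/
theorem totient_mixed_subadd (s n l : ℕ) (hl : 1 ≤ l) (σ : Fin l → Fin n)
    (S : Fin s → MvPolynomial (Fin n) ℝ) (Φ : Fin l → ℕ)
    (hΦ : ∀ i : Fin l, IsLeast {m | 0 < m ∧ (expandDir (σ i))^[m] S = 0} (Φ i)) :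
    ∃ m : ℕ, IsLeast {m' | 0 < m' ∧ (mixedExpand σ)^[m'] S = 0} m ∧
      (∀ i : Fin l, m ≤ Φ i) ∧ l * m ≤ ∑ i : Fin l, Φ i := by
  set T := {m' | 0 < m' ∧ (mixedExpand σ)^[m'] S = 0}
  have hΦT (i : Fin l) : Φ i ∈ T := ⟨(hΦ i).1.1, mixedExpand_iterate_eq_zero i (hΦ i).1.2⟩
  have hleast : IsLeast T (sInf T) := isLeast_csInf ⟨_, hΦT ⟨0, hl⟩⟩
  have hle (i : Fin l) : sInf T ≤ Φ i := hleast.2 (hΦT i)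
  refine ⟨sInf T, hleast, hle, ?_⟩
  simpa using Finset.card_nsmul_le_sum Finset.univ Φ _ fun i _ => hle i
end

section
/- Destabilization occurs before the totient: let s ≥ 2, let S : Fin s → MvPolynomial (Fin n) ℝ be a nonzero tuple, let i : Fin n, and let Φ be the least positive integer with E_i^Φ S = 0. Then there exists k with 0 ≤ k < Φ such that the tuple obtained from E_i^k S by substituting x_i = 0 (i.e. applying entrywise the algebra map aeval sending X i to 0 and X j to X j for j ≠ i) is not the zero tuple. -/
/-!
If `E_i T = 0`, then all partial derivatives `∂_i T_k` vanish, because for `s ≥ 2` the matrix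
`β = J - I` is invertible. So every `T_k` is free of `x_i` and is fixed by the substitution
`x_i = 0`. Hence, if `E_i^{k+1} S = 0` and `E_i^k S` vanishes at `x_i = 0`, then `E_i^k S = 0`.
Descending from `k = Φ - 1` to `k = 0`, the assumption that every stage below `Φ` vanishes at
`x_i = 0` would force `S = 0`.
-/

open MvPolynomial MeasureTheory

/-- Substitution of `x i = 0` (all other variables are left alone). -/
noncomputable def evalZeroAt {n : ℕ} (i : Fin n) :
    MvPolynomial (Fin n) ℝ →ₐ[ℝ] MvPolynomial (Fin n) ℝ :=
  MvPolynomial.aeval (fun j => if j = i then 0 else MvPolynomial.X j)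

theorem eq_zero_of_forall_sum_ne_eq_zero {ι M : Type*} [Fintype ι] [DecidableEq ι]
    [AddCommGroup M] [IsAddTorsionFree M] {v : ι → M} (hι : 2 ≤ Fintype.card ι)
    (hv : ∀ k, ∑ t ∈ Finset.univ.filter (· ≠ k), v t = 0) : v = 0 := by
  have hk : ∀ k, v k = ∑ t, v t := fun k => by
    rw [← Finset.add_sum_erase _ _ (Finset.mem_univ k), ← Finset.filter_ne', hv, add_zero]
  have hsum : (Fintype.card ι - 1) • ∑ t, v t = 0 := by
    have : ∑ t, v t = Fintype.card ι • ∑ t, v t := by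
      conv_lhs => rw [Finset.sum_congr rfl fun t _ => hk t]
      simp
    rw [← Nat.sub_add_cancel (by omega : 1 ≤ Fintype.card ι), succ_nsmul] at this
    simpa using this
  rw [nsmul_eq_zero_iff_right (by omega)] at hsum
  funext k
  exact (hk k).trans hsum

theorem MvPolynomial.notMem_vars_of_pderiv_eq_zero {R σ : Type*} [CommSemiring R]
    [NoZeroDivisors R] [CharZero R] {p : MvPolynomial σ R} {i : σ} (hp : pderiv i p = 0) :
    i ∉ p.vars := by
  classical
  intro hi
  obtain ⟨d, hd, hid⟩ := (mem_vars_iff_mem_support i).mp hi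
  have hd_eq : d - Finsupp.single i 1 + Finsupp.single i 1 = d :=
    tsub_add_cancel_of_le (Finsupp.single_le_iff.mpr (Nat.one_le_iff_ne_zero.mpr
      (Finsupp.mem_support_iff.mp hid)))
  have := coeff_pderiv (i := i) p (d - Finsupp.single i 1)
  rw [hp, hd_eq, coeff_zero] at this
  exact mul_ne_zero (mem_support_iff.mp hd) (Nat.cast_add_one_ne_zero _) this.symm

theorem evalZeroAt_eq_self {n : ℕ} {i : Fin n} {p : MvPolynomial (Fin n) ℝ} (hi : i ∉ p.vars) :
    evalZeroAt i p = p := by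
  conv_rhs => rw [← aeval_X_left_apply p]
  exact eval₂Hom_congr' rfl (fun j hj _ => if_neg (ne_of_mem_of_not_mem hj hi)) rfl

theorem pderiv_eq_zero_of_expandDir_eq_zero {s n : ℕ} (hs : 2 ≤ s) {i : Fin n}
    {T : Fin s → MvPolynomial (Fin n) ℝ} (hT : expandDir i T = 0) (k : Fin s) :
    pderiv i (T k) = 0 :=
  congrFun (eq_zero_of_forall_sum_ne_eq_zero (v := fun t => pderiv i (T t))
    (by simpa using hs) (congrFun hT)) k

theorem eq_zero_of_expandDir_eq_zero_of_evalZeroAt_eq_zero {s n : ℕ} (hs : 2 ≤ s) {i : Fin n}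
    {T : Fin s → MvPolynomial (Fin n) ℝ} (hT : expandDir i T = 0)
    (hT₀ : (fun r => evalZeroAt i (T r)) = 0) : T = 0 := by
  funext r
  rw [← evalZeroAt_eq_self
    (notMem_vars_of_pderiv_eq_zero (pderiv_eq_zero_of_expandDir_eq_zero hs hT r))]
  exact congrFun hT₀ r

theorem eq_zero_of_iterate_expandDir_eq_zero {s n : ℕ} (hs : 2 ≤ s) {i : Fin n} (m : ℕ)
    {T : Fin s → MvPolynomial (Fin n) ℝ} (hT : (expandDir i)^[m] T = 0)
    (hT₀ : ∀ k < m, (fun r => evalZeroAt i ((expandDir i)^[k] T r)) = 0) : T = 0 := by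
  induction m generalizing T with
  | zero => exact hT
  | succ m ih =>
    have hET : expandDir i T = 0 :=
      ih hT fun k hk => by simpa using hT₀ (k + 1) (by omega)
    exact eq_zero_of_expandDir_eq_zero_of_evalZeroAt_eq_zero hs hET (hT₀ 0 m.succ_pos)

/-- destabilization occurs at some stage strictly before the totient. -/
theorem destabilization_before_totient (s n : ℕ) (hs : 2 ≤ s) (i : Fin n)
    (S : Fin s → MvPolynomial (Fin n) ℝ) (hS : S ≠ 0) (Φ : ℕ)
    (hΦ : IsLeast {m | 0 < m ∧ (expandDir i)^[m] S = 0} Φ) :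
    ∃ k : ℕ, k < Φ ∧
      (fun r : Fin s => evalZeroAt i (((expandDir i)^[k] S) r)) ≠ 0 := by
  by_contra! h
  exact hS (eq_zero_of_iterate_expandDir_eq_zero hs Φ hΦ.1.2 h)
end

section
/- The totient equals the maximal index plus one: let s ≥ 2 and let S = (f₁, …, f_s) be a tuple of polynomials in MvPolynomial (Fin n) ℝ. For every direction j : Fin n, the least positive integer m with E_j^m S = 0 equals (max_{1 ≤ i ≤ s} MvPolynomial.degreeOf j (f_i)) + 1, where degreeOf j f is the largest power of x_j occurring in f. -/
open MvPolynomial MeasureTheory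

lemma coeff_pderiv' {n : ℕ} (j : Fin n) (f : MvPolynomial (Fin n) ℝ) (m : Fin n →₀ ℕ) :
    coeff m (pderiv j f) = (m j + 1 : ℝ) * coeff (m + Finsupp.single j 1) f := by
  conv_lhs => rw [f.as_sum]
  rw [map_sum, coeff_sum]
  simp_rw [pderiv_monomial, coeff_monomial]
  rw [Finset.sum_eq_single (m + Finsupp.single j 1)]
  · have h1 : (m + Finsupp.single j 1) - Finsupp.single j 1 = m := by
      simp
    rw [if_pos h1]
    rw [Finsupp.add_apply, Finsupp.single_eq_same]
    push_cast
    ring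
  · intro d _ hd
    split_ifs with h
    · rcases Nat.eq_zero_or_pos (d j) with h0 | h0
      · simp [h0]
      · exfalso; apply hd
        have : Finsupp.single j 1 ≤ d := by
          rw [Finsupp.single_le_iff]; exact h0
        rw [← tsub_add_cancel_of_le this, h]
    · rfl
  · intro h
    rw [notMem_support_iff] at h
    simp [h]

lemma pderiv_eq_zero_of_degreeOf_eq_zero {n : ℕ} (j : Fin n) (f : MvPolynomial (Fin n) ℝ)
    (h : degreeOf j f = 0) : pderiv j f = 0 := by
  ext m
  rw [coeff_pderiv', coeff_zero]
  rcases eq_or_ne (coeff (m + Finsupp.single j 1) f) 0 with h0 | h0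
  · rw [h0, mul_zero]
  · exfalso
    have hmem : m + Finsupp.single j 1 ∈ f.support := mem_support_iff.mpr h0
    have := monomial_le_degreeOf j hmem
    rw [h, Finsupp.add_apply, Finsupp.single_eq_same] at this
    omega

lemma degreeOf_pderiv_eq {n : ℕ} (j : Fin n) (f : MvPolynomial (Fin n) ℝ)
    (h : 0 < degreeOf j f) :
    pderiv j f ≠ 0 ∧ degreeOf j (pderiv j f) = degreeOf j f - 1 := by
  have hne : f.support.Nonempty := by
    rw [Finset.nonempty_iff_ne_empty]
    intro hc
    rw [degreeOf_eq_sup, hc] at h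
    simp at h
  obtain ⟨d, hd, hsup⟩ := Finset.exists_mem_eq_sup f.support hne (fun m => m j)
  rw [← degreeOf_eq_sup] at hsup
  have hdj : 0 < d j := by omega
  set d' : Fin n →₀ ℕ := d - Finsupp.single j 1 with hd'
  have hadd : d' + Finsupp.single j 1 = d :=
    tsub_add_cancel_of_le (by rw [Finsupp.single_le_iff]; exact hdj)
  have hcoeff : coeff d' (pderiv j f) = (d' j + 1 : ℝ) * coeff d f := by
    rw [coeff_pderiv', hadd]
  have hdsub : d' j = d j - 1 := by
    rw [hd']; simp [Finsupp.tsub_apply]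
  have hcd : coeff d f ≠ 0 := mem_support_iff.mp hd
  have hwit : coeff d' (pderiv j f) ≠ 0 := by
    rw [hcoeff]
    apply mul_ne_zero _ hcd
    positivity
  have hwitmem : d' ∈ (pderiv j f).support := mem_support_iff.mpr hwit
  constructor
  · intro hc; rw [hc] at hwitmem; simp at hwitmem
  · apply le_antisymm
    · rw [degreeOf_le_iff]
      intro m hm
      have hc := mem_support_iff.mp hm
      rw [coeff_pderiv'] at hc
      have h2 : coeff (m + Finsupp.single j 1) f ≠ 0 := by
        intro hc2; rw [hc2, mul_zero] at hc; exact hc rfl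
      have := monomial_le_degreeOf j (mem_support_iff.mpr h2)
      rw [Finsupp.add_apply, Finsupp.single_eq_same] at this
      omega
    · have h1 := monomial_le_degreeOf j hwitmem
      omega

lemma iterate_pderiv_eq_zero_iff {n : ℕ} (j : Fin n) (f : MvPolynomial (Fin n) ℝ)
    (m : ℕ) (hm : 0 < m) : (pderiv j)^[m] f = 0 ↔ degreeOf j f < m := by
  constructor
  · intro h
    by_contra hc
    push_neg at hc
    -- m ≤ degreeOf j f; show iterate nonzero
    have key : ∀ k : ℕ, ∀ g : MvPolynomial (Fin n) ℝ, g ≠ 0 → k ≤ degreeOf j g →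
        (pderiv j)^[k] g ≠ 0 ∧ degreeOf j ((pderiv j)^[k] g) = degreeOf j g - k := by
      intro k
      induction k with
      | zero => intro g hg _; simpa using hg
      | succ k ih =>
        intro g hg hk
        have hpos : 0 < degreeOf j g := by omega
        obtain ⟨h1, h2⟩ := degreeOf_pderiv_eq j g hpos
        rw [Function.iterate_succ_apply]
        have := ih (pderiv j g) h1 (by omega)
        rw [h2] at this
        exact ⟨this.1, by rw [this.2]; omega⟩
    have hg0 : f ≠ 0 := by
      intro hc2; rw [hc2, degreeOf_zero] at hc; omega
    exact (key m f hg0 hc).1 h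
  · intro h
    induction m generalizing f with
    | zero => omega
    | succ m ih =>
      rcases Nat.eq_zero_or_pos m with h0 | h0
      · subst h0
        have : degreeOf j f = 0 := by omega
        simpa using pderiv_eq_zero_of_degreeOf_eq_zero j f this
      · rw [Function.iterate_succ_apply]
        rcases Nat.eq_zero_or_pos (degreeOf j f) with hd | hd
        · rw [pderiv_eq_zero_of_degreeOf_eq_zero j f hd]
          exact Function.iterate_fixed (map_zero _) m
        · exact ih (pderiv j f) h0 (by
            have := (degreeOf_pderiv_eq j f hd).2; omega)

/-- The off-diagonal all-ones matrix map. -/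
noncomputable def betaMap' {s n : ℕ} (v : Fin s → MvPolynomial (Fin n) ℝ) :
    Fin s → MvPolynomial (Fin n) ℝ :=
  fun k => (∑ t, v t) - v k

/-- Componentwise pderiv. -/
noncomputable def derivMap' {s n : ℕ} (j : Fin n) (v : Fin s → MvPolynomial (Fin n) ℝ) :
    Fin s → MvPolynomial (Fin n) ℝ :=
  fun k => pderiv j (v k)

lemma expandDir_eq {s n : ℕ} (j : Fin n) (S : Fin s → MvPolynomial (Fin n) ℝ) :
    expandDir j S = betaMap' (derivMap' j S) := by
  funext k
  rw [expandDir, betaMap', derivMap']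
  rw [Finset.filter_ne', Finset.sum_erase_eq_sub (Finset.mem_univ k)]
  rfl

lemma beta_deriv_comm {s n : ℕ} (j : Fin n) :
    Function.Commute (betaMap' (s := s) (n := n)) (derivMap' j) := by
  intro v
  funext k
  simp only [Function.comp_apply, betaMap', derivMap', map_sub, map_sum]

lemma derivMap'_iterate {s n : ℕ} (j : Fin n) (m : ℕ) (v : Fin s → MvPolynomial (Fin n) ℝ) :
    (derivMap' j)^[m] v = fun k => (pderiv j)^[m] (v k) := by
  induction m with
  | zero => rfl
  | succ m ih =>
    rw [Function.iterate_succ_apply', ih]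
    funext k
    rw [Function.iterate_succ_apply']
    rfl

lemma expandDir_iterate {s n : ℕ} (j : Fin n) (m : ℕ) (S : Fin s → MvPolynomial (Fin n) ℝ) :
    (expandDir j)^[m] S = (betaMap')^[m] (fun k => (pderiv j)^[m] (S k)) := by
  have h : expandDir (s := s) j = betaMap' ∘ derivMap' j := by
    funext S; exact expandDir_eq j S
  rw [h, (beta_deriv_comm j).comp_iterate, Function.comp_apply, derivMap'_iterate]

lemma betaMap'_eq_zero {s n : ℕ} (hs : 2 ≤ s) (v : Fin s → MvPolynomial (Fin n) ℝ)
    (h : betaMap' v = 0) : v = 0 := by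
  have hk : ∀ k, v k = ∑ t, v t := by
    intro k
    have := congrFun h k
    rw [betaMap'] at this
    simp only [Pi.zero_apply] at this
    linear_combination (norm := module) -this
  set u := ∑ t, v t with hu
  have hsum : u = C (s : ℝ) * u := by
    calc u = ∑ t : Fin s, v t := hu
      _ = ∑ _t : Fin s, u := Finset.sum_congr rfl (fun t _ => hk t)
      _ = s • u := by simp
      _ = (s : ℝ) • u := (Nat.cast_smul_eq_nsmul ℝ s u).symm
      _ = C (s : ℝ) * u := smul_eq_C_mul u _
  have hu0 : u = 0 := by
    have h1 : (C ((s : ℝ) - 1)) * u = 0 := by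
      rw [map_sub, C_1, sub_mul, one_mul, ← hsum, sub_self]
    rcases mul_eq_zero.mp h1 with h2 | h2
    · exfalso
      rw [C_eq_zero] at h2
      have : (2 : ℝ) ≤ (s : ℝ) := by exact_mod_cast hs
      nlinarith
    · exact h2
  funext k
  rw [Pi.zero_apply, hk k, hu0]

lemma betaMap'_iterate_eq_zero {s n : ℕ} (hs : 2 ≤ s) (m : ℕ)
    (v : Fin s → MvPolynomial (Fin n) ℝ) (h : (betaMap')^[m] v = 0) : v = 0 := by
  induction m with
  | zero => exact h
  | succ m ih =>
    rw [Function.iterate_succ_apply'] at h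
    exact ih (betaMap'_eq_zero hs _ h)

lemma betaMap'_zero {s n : ℕ} : betaMap' (s := s) (n := n) 0 = 0 := by
  funext k; simp [betaMap']

/-- the totient of an expansion in direction `j` equals the maximal
index (degree in `x j`) over the entries of the tuple, plus one. -/
theorem totient_eq_max_degreeOf_add_one (s n : ℕ) (hs : 2 ≤ s) (j : Fin n)
    (S : Fin s → MvPolynomial (Fin n) ℝ) :
    IsLeast {m | 0 < m ∧ (expandDir j)^[m] S = 0}
      ((Finset.univ.sup fun i : Fin s => MvPolynomial.degreeOf j (S i)) + 1) := by
  set D := Finset.univ.sup fun i : Fin s => MvPolynomial.degreeOf j (S i) with hD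
  constructor
  · refine ⟨Nat.succ_pos D, ?_⟩
    rw [expandDir_iterate]
    have hzero : (fun k => (pderiv j)^[D + 1] (S k)) = (0 : Fin s → MvPolynomial (Fin n) ℝ) := by
      funext k
      rw [Pi.zero_apply, iterate_pderiv_eq_zero_iff j (S k) (D + 1) (Nat.succ_pos D)]
      have : degreeOf j (S k) ≤ D :=
        Finset.le_sup (f := fun i : Fin s => degreeOf j (S i)) (Finset.mem_univ k)
      omega
    rw [hzero]
    exact Function.iterate_fixed betaMap'_zero (D + 1)
  · rintro m ⟨hm, hE⟩
    rw [expandDir_iterate] at hE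
    have h0 := betaMap'_iterate_eq_zero hs m _ hE
    have hdeg : ∀ k, degreeOf j (S k) < m := by
      intro k
      rw [← iterate_pderiv_eq_zero_iff j (S k) m hm]
      simpa using congrFun h0 k
    have : D < m := by
      rw [hD, Finset.sup_lt_iff (by exact hm)]
      intro k _; exact hdeg k
    omega
end

section
/- Characterization of the vanishing of an expansion: let s ≥ 2 and let T : Fin s → MvPolynomial (Fin n) ℝ be a tuple. For any direction i : Fin n, E_i T = 0 if and only if MvPolynomial.pderiv i (T k) = 0 for every k : Fin s; equivalently, an expansion in direction x_i vanishes exactly when every entry of the tuple is free of the variable x_i after differentiation. (This is the key claim, proved in the paper's destabilization argument, that the residue of an expansion contains no occurrence of the direction x_i.) -/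
open MvPolynomial MeasureTheory

/-- for `s ≥ 2` the expansion of a tuple in direction `i` vanishes
iff every entry has vanishing partial derivative in direction `i`. -/
theorem expandDir_eq_zero_iff (s n : ℕ) (hs : 2 ≤ s) (i : Fin n)
    (T : Fin s → MvPolynomial (Fin n) ℝ) :
    expandDir i T = 0 ↔ ∀ k : Fin s, MvPolynomial.pderiv i (T k) = 0 := by
  set a : Fin s → MvPolynomial (Fin n) ℝ := fun k => MvPolynomial.pderiv i (T k) with ha
  have hfilter : ∀ k : Fin s, Finset.univ.filter (fun t => t ≠ k) = Finset.univ.erase k := by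
    intro k; ext t; simp [Finset.mem_erase, and_comm]
  constructor
  · intro h
    have h' : ∀ k, ∑ t ∈ Finset.univ.erase k, a t = 0 := by
      intro k
      have := congrFun h k
      simpa [expandDir, hfilter k, ha] using this
    set S := ∑ t, a t with hS
    have hak : ∀ k, a k = S := by
      intro k
      have := Finset.sum_erase_eq_sub (f := a) (Finset.mem_univ k)
      rw [h' k] at this
      exact (sub_eq_zero.mp this.symm).symm
    have hsum : S = (s : ℕ) • S := by
      calc S = ∑ k : Fin s, a k := hS
        _ = ∑ _k : Fin s, S := by simp [hak]
        _ = (s : ℕ) • S := by simp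
    have hzero : S = 0 := by
      have hz : ((s : ℝ) - 1) • S = 0 := by
        have hh := hsum
        rw [← Nat.cast_smul_eq_nsmul ℝ] at hh
        rw [sub_smul, one_smul, ← hh, sub_self]
      have hne : ((s : ℝ) - 1) ≠ 0 := by
        have : (2 : ℝ) ≤ (s : ℝ) := by exact_mod_cast hs
        intro h0; rw [sub_eq_zero] at h0; linarith
      calc S = (((s : ℝ) - 1)⁻¹ * ((s : ℝ) - 1)) • S := by
              rw [inv_mul_cancel₀ hne, one_smul]
        _ = ((s : ℝ) - 1)⁻¹ • (((s : ℝ) - 1) • S) := by rw [mul_smul]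
        _ = 0 := by rw [hz, smul_zero]
    intro k
    rw [show MvPolynomial.pderiv i (T k) = a k from rfl, hak k, hzero]
  · intro h
    funext k
    simp only [expandDir]
    rw [Finset.sum_eq_zero]
    · rfl
    intro t _
    exact h t
end
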